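/- arXiv:1002.4563 — 5 statements merged into one kernel-verified Lean document; each statement's English description precedes it below -/
import Mathlib

section
/- Every coarse topological space is locally compact: if X is a Hausdorff topological space equipped with a coarse structure compatible with the topology, then every point of X has a compact neighbourhood. -/
/-- An (abstract, unital) coarse structure on a set `X`: a collection of
"controlled" subsets of `X × X` containing the diagonal, closed under subsets,
finite unions, transposes and composites, whose union is all of `X × X`. -/
structure CoarseStructure (X : Type*) where
  IsControlled : Set (X × X) → Prop
  isControlled_diagonal : IsControlled {p : X × X | p.1 = p.2}
  isControlled_subset : ∀ {M N : Set (X × X)}, IsControlled M → N ⊆ M → IsControlled N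
  isControlled_union : ∀ {M N : Set (X × X)}, IsControlled M → IsControlled N →
    IsControlled (M ∪ N)
  isControlled_transpose : ∀ {M : Set (X × X)}, IsControlled M →
    IsControlled (Prod.swap '' M)
  isControlled_comp : ∀ {M N : Set (X × X)}, IsControlled M → IsControlled N →
    IsControlled {p : X × X | ∃ y, (p.1, y) ∈ M ∧ (y, p.2) ∈ N}
  isControlled_covers : ∀ p : X × X, ∃ M, IsControlled M ∧ p ∈ M

/-- A subset `B` of a coarse space is bounded if `B ⊆ M(x)` for some controlled
set `M` and point `x`. -/
def CoarseStructure.IsBoundedSet {X : Type*} (C : CoarseStructure X) (B : Set X) : Prop :=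
  ∃ M, C.IsControlled M ∧ ∃ x : X, B ⊆ {y : X | (x, y) ∈ M}

/-- A coarse structure on a (Hausdorff) topological space is compatible with the
topology if every controlled set is contained in an open controlled set and the
closure of every bounded set is compact. -/
structure CoarseStructure.Compatible {X : Type*} [TopologicalSpace X]
    (C : CoarseStructure X) : Prop where
  exists_open_controlled : ∀ M : Set (X × X), C.IsControlled M →
    ∃ U : Set (X × X), IsOpen U ∧ C.IsControlled U ∧ M ⊆ U
  isCompact_closure_of_isBoundedSet : ∀ B : Set X, C.IsBoundedSet B → IsCompact (closure B)

/-- Every coarse topological space is locally compact: every point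
of a Hausdorff space with a compatible coarse structure has a compact
neighbourhood. -/
theorem coarseTopological_locallyCompact {X : Type*} [TopologicalSpace X] [T2Space X]
    (C : CoarseStructure X) (hC : C.Compatible) :
    ∀ x : X, ∃ K : Set X, K ∈ nhds x ∧ IsCompact K := by
  intro x
  obtain ⟨U, hUo, hUc, hdU⟩ := hC.exists_open_controlled _ C.isControlled_diagonal
  refine ⟨closure {y : X | (x, y) ∈ U}, ?_, ?_⟩
  · apply Filter.mem_of_superset _ subset_closure
    have : IsOpen {y : X | (x, y) ∈ U} :=
      hUo.preimage (Continuous.prodMk_right x)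
    exact this.mem_nhds (hdU rfl)
  · exact hC.isCompact_closure_of_isBoundedSet _ ⟨U, hUc, x, fun y hy => hy⟩
end

section
/- Let X be a coarse topological space contained as a topologically dense subset of a Hausdorff space X̄, and write ∂X = X̄ \ X. If B ⊆ X is bounded with respect to the continuously controlled coarse structure relative to X̄ (i.e. B ⊆ M(x) for some continuously controlled set M and some point x ∈ X), then the closure of B in X̄ is compact and disjoint from ∂X (so this closure is contained in X). -/
section ContinuouslyControlled

variable {Xb : Type*} [TopologicalSpace Xb]

/-- Given a coarse topological space realised as a subset `s` of a Hausdorff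
space `Xb`, with boundary `∂X = sᶜ`, an open set `M ⊆ X × X` is strongly
controlled if it is controlled for the ambient coarse structure and its closure
`M̄` in `X̄ × X̄` satisfies `M̄ ∩ ((X̄ × ∂X) ∪ (∂X × X̄)) ⊆ Δ_{∂X}`. -/
def StronglyControlled (s : Set Xb) (C : CoarseStructure ↥s)
    (M : Set (↥s × ↥s)) : Prop :=
  IsOpen M ∧ C.IsControlled M ∧
    closure (Prod.map (Subtype.val) (Subtype.val) '' M) ∩
        {q : Xb × Xb | q.1 ∉ s ∨ q.2 ∉ s} ⊆
      {q : Xb × Xb | q.1 = q.2 ∧ q.1 ∉ s}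

/-- The continuously controlled coarse structure relative to `Xb`: its
controlled sets are the finite composites of subsets of strongly controlled
open sets. -/
inductive CCControlled (s : Set Xb) (C : CoarseStructure ↥s) :
    Set (↥s × ↥s) → Prop
  | of_subset {M N : Set (↥s × ↥s)} : StronglyControlled s C M → N ⊆ M →
      CCControlled s C N
  | comp {M N : Set (↥s × ↥s)} : CCControlled s C M → CCControlled s C N →
      CCControlled s C {q : ↥s × ↥s | ∃ y, (q.1, y) ∈ M ∧ (y, q.2) ∈ N}

end ContinuouslyControlled

/-!
Every continuously controlled set is controlled for the ambient coarse structure, so a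
continuously controlled bounded set `B` is bounded in `X`, and compatibility makes its closure
`K` in `X` compact. The image of `K` in the Hausdorff space `X̄` is then compact, hence closed,
so it is the closure of `B` in `X̄`; being contained in `X`, it misses `∂X`.
-/

theorem CCControlled.isControlled {Xb : Type*} [TopologicalSpace Xb] {s : Set Xb}
    {C : CoarseStructure ↥s} {M : Set (↥s × ↥s)} (hM : CCControlled s C M) :
    C.IsControlled M := by
  induction hM with
  | of_subset hSC hsub => exact C.isControlled_subset hSC.2.1 hsub
  | comp _ _ ih₁ ih₂ => exact C.isControlled_comp ih₁ ih₂

theorem closure_image_val_eq_of_isCompact_closure {X : Type*} [TopologicalSpace X] [T2Space X]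
    {s : Set X} {B : Set s} (hB : IsCompact (closure B)) :
    closure (Subtype.val '' B) = Subtype.val '' closure B :=
  (closure_minimal (Set.image_mono subset_closure)
      (hB.image continuous_subtype_val).isClosed).antisymm
    (image_closure_subset_closure_image continuous_subtype_val)

theorem cc_bounded_closure_compact_disjoint_boundary_general
    {Xb : Type*} [TopologicalSpace Xb] [T2Space Xb] (s : Set Xb)
    (C : CoarseStructure ↥s) (hC : C.Compatible)
    (B : Set ↥s)
    (hB : ∃ M, CCControlled s C M ∧ ∃ x : ↥s, B ⊆ {y : ↥s | (x, y) ∈ M}) :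
    IsCompact (closure (Subtype.val '' B)) ∧
      closure (Subtype.val '' B) ∩ (Set.univ \ s) = ∅ := by
  obtain ⟨M, hM, hBM⟩ := hB
  have hK : IsCompact (closure B) :=
    hC.isCompact_closure_of_isBoundedSet B ⟨M, hM.isControlled, hBM⟩
  rw [closure_image_val_eq_of_isCompact_closure hK]
  refine ⟨hK.image continuous_subtype_val, ?_⟩
  rw [← Set.compl_eq_univ_sdiff, ← Set.disjoint_iff_inter_eq_empty,
    Set.disjoint_compl_right_iff_subset]
  exact Subtype.coe_image_subset s _

/-- If `B` is bounded for the continuously controlled coarse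
structure relative to `X̄`, then the closure of `B` in `X̄` is compact and
disjoint from `∂X = X̄ \ X`. -/
theorem cc_bounded_closure_compact_disjoint_boundary
    {Xb : Type*} [TopologicalSpace Xb] [T2Space Xb] (s : Set Xb)
    (hdense : Dense s) (C : CoarseStructure ↥s) (hC : C.Compatible)
    (B : Set ↥s)
    (hB : ∃ M, CCControlled s C M ∧ ∃ x : ↥s, B ⊆ {y : ↥s | (x, y) ∈ M}) :
    IsCompact (closure (Subtype.val '' B)) ∧
      closure (Subtype.val '' B) ∩ (Set.univ \ s) = ∅ :=
  cc_bounded_closure_compact_disjoint_boundary_general s C hC B hB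
end

section
/- Every generalised ray R is flasque. Specifically, the map t : R → R defined by t(s) = s + 1 satisfies: (i) for every bounded subset B ⊆ R there exists N ∈ ℕ such that tⁿ[R] ∩ B = ∅ for all n ≥ N; (ii) for every controlled set M ⊆ R × R the union ⋃_{n∈ℕ} tⁿ[M] is controlled, where tⁿ[M] = {(tⁿ(x), tⁿ(y)) : (x,y) ∈ M}; and (iii) t is close to the identity map, i.e. {(s, s+1) : s ∈ R} is controlled. -/
open scoped NNReal

/-- A generalised ray: a coarse structure on `[0,∞)` compatible with the
topology, closed under sums `M + N`, interval saturations `Mˢ`, and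
translates `a + M` of controlled sets. -/
structure IsGeneralisedRay (C : CoarseStructure ℝ≥0) : Prop where
  compatible : C.Compatible
  isControlled_sum : ∀ M N : Set (ℝ≥0 × ℝ≥0), C.IsControlled M → C.IsControlled N →
    C.IsControlled {q : ℝ≥0 × ℝ≥0 |
      ∃ u v x y : ℝ≥0, (u, v) ∈ M ∧ (x, y) ∈ N ∧ q = (u + x, v + y)}
  isControlled_interval : ∀ M : Set (ℝ≥0 × ℝ≥0), C.IsControlled M →
    C.IsControlled {q : ℝ≥0 × ℝ≥0 |
      ∃ x y : ℝ≥0, (x, y) ∈ M ∧ x ≤ q.1 ∧ q.1 ≤ y ∧ x ≤ q.2 ∧ q.2 ≤ y}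
  isControlled_translate : ∀ M : Set (ℝ≥0 × ℝ≥0), C.IsControlled M → ∀ a : ℝ≥0,
    C.IsControlled {q : ℝ≥0 × ℝ≥0 | ∃ x y : ℝ≥0, (x, y) ∈ M ∧ q = (a + x, a + y)}

/-- The translation map `t(s) = s + 1` on the generalised ray. -/
def rayShift : ℝ≥0 → ℝ≥0 := fun s => s + 1

/-! The iterate `tⁿ` is translation by `n`. Bounded sets have compact closure, so they are
bounded above and eventually lie below the image `[n, ∞)` of `tⁿ`. Both `⋃ₙ tⁿ[M]` and the
graph of `t` consist of translates `(x + a, y + a)` of pairs of a controlled set (`M`, resp.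
`{(0, 1)}`), and the set of all such translates is the sum of that controlled set with the
diagonal. -/

lemma rayShift_iterate_apply (n : ℕ) (s : ℝ≥0) : rayShift^[n] s = s + n := by
  induction n with
  | zero => simp
  | succ k ih =>
    rw [Function.iterate_succ_apply', ih, rayShift]
    push_cast
    ring

lemma range_rayShift_iterate_subset (n : ℕ) : Set.range (rayShift^[n]) ⊆ Set.Ici (n : ℝ≥0) := by
  rintro _ ⟨s, rfl⟩
  simp [rayShift_iterate_apply]

lemma CoarseStructure.Compatible.bddAbove {X : Type*} [TopologicalSpace X] [LinearOrder X]
    [ClosedIciTopology X] [Nonempty X] {C : CoarseStructure X} (hC : C.Compatible) {B : Set X}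
    (hB : C.IsBoundedSet B) : BddAbove B :=
  (hC.isCompact_closure_of_isBoundedSet B hB).bddAbove.mono subset_closure

lemma IsGeneralisedRay.isControlled_iUnion_translate {C : CoarseStructure ℝ≥0}
    (hC : IsGeneralisedRay C) {M : Set (ℝ≥0 × ℝ≥0)} (hM : C.IsControlled M) :
    C.IsControlled (⋃ a : ℝ≥0, (fun q : ℝ≥0 × ℝ≥0 => (q.1 + a, q.2 + a)) '' M) := by
  refine C.isControlled_subset (hC.isControlled_sum M _ hM C.isControlled_diagonal) ?_
  rintro _ ⟨_, ⟨a, rfl⟩, ⟨x, y⟩, hxy, rfl⟩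
  exact ⟨x, y, a, a, hxy, rfl, rfl⟩

/-- Every generalised ray is flasque, witnessed by `t(s) = s + 1`:
(i) the iterates `tⁿ` eventually miss every bounded set; (ii) for every
controlled `M` the union `⋃ₙ tⁿ[M]` is controlled; (iii) `t` is close to the
identity map. -/
theorem generalisedRay_flasque (C : CoarseStructure ℝ≥0) (hC : IsGeneralisedRay C) :
    (∀ B : Set ℝ≥0, C.IsBoundedSet B →
      ∃ N : ℕ, ∀ n ≥ N, Set.range (rayShift^[n]) ∩ B = ∅) ∧
    (∀ M : Set (ℝ≥0 × ℝ≥0), C.IsControlled M →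
      C.IsControlled (⋃ n : ℕ,
        (fun q : ℝ≥0 × ℝ≥0 => (rayShift^[n] q.1, rayShift^[n] q.2)) '' M)) ∧
    C.IsControlled (Set.range fun s : ℝ≥0 => (s, rayShift s)) := by
  refine ⟨fun B hB => ?_, fun M hM => ?_, ?_⟩
  · obtain ⟨b, hb⟩ := hC.compatible.bddAbove hB
    obtain ⟨N, hbN⟩ := exists_nat_gt b
    refine ⟨N, fun n hn => Set.eq_empty_of_forall_notMem fun s ⟨hsn, hsB⟩ => ?_⟩
    have hNn : (N : ℝ≥0) ≤ n := by exact_mod_cast hn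
    exact (hbN.trans_le (hNn.trans (range_rayShift_iterate_subset n hsn))).not_ge (hb hsB)
  · refine C.isControlled_subset (hC.isControlled_iUnion_translate hM) ?_
    rintro _ ⟨_, ⟨n, rfl⟩, q, hq, rfl⟩
    exact Set.mem_iUnion.2 ⟨n, q, hq, by simp [rayShift_iterate_apply]⟩
  · obtain ⟨K, hK, h01⟩ := C.isControlled_covers (0, 1)
    refine C.isControlled_subset (hC.isControlled_iUnion_translate hK) ?_
    rintro _ ⟨s, rfl⟩
    exact Set.mem_iUnion.2 ⟨s, (0, 1), h01, by simp [rayShift, add_comm]⟩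
end

section
/- Close coarse maps are coarsely homotopic by an explicit elementary homotopy: let X and Y be coarse spaces, let R be a generalised ray, let p : X → R be a coarse map, and let f₀, f₁ : X → Y be coarse maps that are close to each other. Define H : I_pX → Y by H(x,t) = f₀(x) if t < 1 and H(x,t) = f₁(x) if t ≥ 1. Then H is a coarse map, H ∘ i₀ = f₀, and H ∘ i₁ = f₁. -/
open scoped NNReal

/-- A coarse map between sets with given collections of controlled sets:
images of controlled sets are controlled, and preimages of bounded sets are
bounded. -/
def IsCoarseMapP {α β : Type*} (cα : Set (α × α) → Prop) (cβ : Set (β × β) → Prop)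
    (f : α → β) : Prop :=
  (∀ M : Set (α × α), cα M → cβ (Prod.map f f '' M)) ∧
  (∀ B : Set β, (∃ M, cβ M ∧ ∃ y : β, B ⊆ {z : β | (y, z) ∈ M}) →
    (∃ M, cα M ∧ ∃ x : α, f ⁻¹' B ⊆ {z : α | (x, z) ∈ M}))

/-- The product coarse structure on `X × R` (restricted to which the cylinder
coarse structure is defined). -/
def ProdControlled {X : Type*} (CX : CoarseStructure X) (CR : CoarseStructure ℝ≥0)
    (M : Set ((X × ℝ≥0) × (X × ℝ≥0))) : Prop :=
  ∃ M₁ M₂, CX.IsControlled M₁ ∧ CR.IsControlled M₂ ∧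
    M ⊆ {q : (X × ℝ≥0) × (X × ℝ≥0) | (q.1.1, q.2.1) ∈ M₁ ∧ (q.1.2, q.2.2) ∈ M₂}

/-- The `p`-cylinder `I_pX = {(x,t) ∈ X × R : t ≤ p(x) + 1}`. -/
abbrev Cylinder {X : Type*} (p : X → ℝ≥0) : Type _ :=
  {q : X × ℝ≥0 // q.2 ≤ p q.1 + 1}

/-- The coarse structure of the cylinder, restricted from the product coarse
structure. -/
def CylControlled {X : Type*} (CX : CoarseStructure X) (CR : CoarseStructure ℝ≥0)
    (p : X → ℝ≥0) (M : Set (Cylinder p × Cylinder p)) : Prop :=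
  ProdControlled CX CR (Prod.map Subtype.val Subtype.val '' M)

/-- The bottom inclusion `i₀(x) = (x, 0)` of the cylinder. -/
def cylI0 {X : Type*} (p : X → ℝ≥0) (x : X) : Cylinder p := ⟨(x, 0), zero_le'⟩

/-- The top inclusion `i₁(x) = (x, p(x) + 1)` of the cylinder. -/
def cylI1 {X : Type*} (p : X → ℝ≥0) (x : X) : Cylinder p := ⟨(x, p x + 1), le_rfl⟩

/-- The homotopy `H(x,t) = f₀(x)` for `t < 1`, `H(x,t) = f₁(x)` for `t ≥ 1`. -/
noncomputable def cylH {X Y : Type*} (p : X → ℝ≥0) (f₀ f₁ : X → Y) (q : Cylinder p) : Y :=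
  if q.val.2 < 1 then f₀ q.val.1 else f₁ q.val.1


/-!
A pair of points of the cylinder over `(x, y)` is sent by `H` to one of `(fᵢ x, fⱼ y)`; each of
the four kinds of pairs is controlled, through `f₀[M]`, `f₁[M]` and composites of `f₀[M]` with
the closeness relation `{(f₀ x, f₁ x)}` and its transpose. The `H`-preimage of a bounded set
lies over `f₀⁻¹B ∪ f₁⁻¹B`, which is bounded in `X`; the heights `t ≤ p x + 1` above a bounded set
are bounded in the ray because `p` is controlled and the ray is closed under sums with the
controlled pair `(0, 1)` and under interval saturation.
-/

open Set

def IsControlledMapP {α β : Type*} (cα : Set (α × α) → Prop) (cβ : Set (β × β) → Prop)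
    (f : α → β) : Prop :=
  ∀ M : Set (α × α), cα M → cβ (Prod.map f f '' M)

namespace CoarseStructure

variable {X : Type*} {C : CoarseStructure X} {A B : Set X}

theorem IsBoundedSet.exists_subset_ball (hB : C.IsBoundedSet B) (x : X) :
    ∃ M, C.IsControlled M ∧ B ⊆ {y | (x, y) ∈ M} := by
  obtain ⟨M, hM, x₀, hB⟩ := hB
  obtain ⟨N, hN, hx⟩ := C.isControlled_covers (x, x₀)
  exact ⟨_, C.isControlled_comp hN hM, fun y hy => ⟨x₀, hx, hB hy⟩⟩

theorem IsBoundedSet.union (hA : C.IsBoundedSet A) (hB : C.IsBoundedSet B) :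
    C.IsBoundedSet (A ∪ B) := by
  obtain ⟨M, hM, x, hA⟩ := hA
  obtain ⟨N, hN, hB⟩ := hB.exists_subset_ball x
  exact ⟨M ∪ N, C.isControlled_union hM hN, x, fun y hy => hy.imp (@hA y) (@hB y)⟩

theorem IsBoundedSet.image {Y : Type*} {D : CoarseStructure Y} {f : X → Y}
    (hf : IsControlledMapP C.IsControlled D.IsControlled f) (hA : C.IsBoundedSet A) :
    D.IsBoundedSet (f '' A) := by
  obtain ⟨M, hM, x, hA⟩ := hA
  refine ⟨_, hf M hM, f x, ?_⟩
  rintro _ ⟨y, hy, rfl⟩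
  exact ⟨(x, y), hA hy, rfl⟩

theorem isControlled_of_close {α : Type*} {f₀ f₁ : α → X}
    (hclose : C.IsControlled (range fun a => (f₀ a, f₁ a))) {M : Set (α × α)}
    (h₀ : C.IsControlled (Prod.map f₀ f₀ '' M)) (h₁ : C.IsControlled (Prod.map f₁ f₁ '' M)) :
    C.IsControlled {q : X × X | ∃ a b, (a, b) ∈ M ∧
      (q.1 = f₀ a ∨ q.1 = f₁ a) ∧ (q.2 = f₀ b ∨ q.2 = f₁ b)} := by
  refine C.isControlled_subset (C.isControlled_union (C.isControlled_union h₀ h₁)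
      (C.isControlled_union (C.isControlled_comp h₀ hclose)
        (C.isControlled_comp (C.isControlled_transpose hclose) h₀))) ?_
  rintro ⟨y, z⟩ ⟨a, b, hab, rfl | rfl, rfl | rfl⟩
  · exact Or.inl (Or.inl ⟨(a, b), hab, rfl⟩)
  · exact Or.inr (Or.inl ⟨f₀ b, ⟨(a, b), hab, rfl⟩, b, rfl⟩)
  · exact Or.inr (Or.inr ⟨f₀ a, ⟨(f₀ a, f₁ a), ⟨a, rfl⟩, rfl⟩, (a, b), hab, rfl⟩)
  · exact Or.inl (Or.inr ⟨(a, b), hab, rfl⟩)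

end CoarseStructure

theorem IsGeneralisedRay.isBoundedSet_le_add_one {C : CoarseStructure ℝ≥0}
    (hC : IsGeneralisedRay C) {S : Set ℝ≥0} (hS : C.IsBoundedSet S) :
    C.IsBoundedSet {t | ∃ s ∈ S, t ≤ s + 1} := by
  obtain ⟨M, hM, hS⟩ := hS.exists_subset_ball 0
  obtain ⟨N, hN, h01⟩ := C.isControlled_covers (0, 1)
  refine ⟨_, hC.isControlled_interval _ (hC.isControlled_sum M N hM hN), 0, ?_⟩
  rintro t ⟨s, hs, ht⟩
  exact ⟨0, s + 1, ⟨0, s, 0, 1, hS hs, h01, by simp⟩, le_rfl, zero_le, zero_le, ht⟩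

section Cylinder

variable {X Y : Type*} {CX : CoarseStructure X} {CY : CoarseStructure Y}
  {CR : CoarseStructure ℝ≥0} {p : X → ℝ≥0} {f₀ f₁ : X → Y}

theorem exists_cylControlled_ball_of_isBoundedSet (hCR : IsGeneralisedRay CR)
    (hp : IsControlledMapP CX.IsControlled CR.IsControlled p) {A : Set X}
    (hA : CX.IsBoundedSet A) :
    ∃ M, CylControlled CX CR p M ∧ ∃ z₀ : Cylinder p,
      {z : Cylinder p | z.val.1 ∈ A} ⊆ {z | (z₀, z) ∈ M} := by
  obtain ⟨T, hT, hAT⟩ := (hCR.isBoundedSet_le_add_one (hA.image hp)).exists_subset_ball 0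
  obtain ⟨K, hK, x₀, hAK⟩ := hA
  refine ⟨{w | (w.1.val.1, w.2.val.1) ∈ K ∧ (w.1.val.2, w.2.val.2) ∈ T},
    ⟨K, T, hK, hT, ?_⟩, ⟨(x₀, 0), zero_le⟩, ?_⟩
  · rintro _ ⟨w, hw, rfl⟩
    exact hw
  · intro z hz
    exact ⟨hAK hz, hAT ⟨p z.val.1, mem_image_of_mem p hz, z.property⟩⟩

theorem cylH_eq_or (z : Cylinder p) :
    cylH p f₀ f₁ z = f₀ z.val.1 ∨ cylH p f₀ f₁ z = f₁ z.val.1 := by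
  unfold cylH
  split_ifs <;> simp

theorem cylH_isControlledMap (hf₀ : IsControlledMapP CX.IsControlled CY.IsControlled f₀)
    (hf₁ : IsControlledMapP CX.IsControlled CY.IsControlled f₁)
    (hclose : CY.IsControlled (range fun x : X => (f₀ x, f₁ x))) :
    IsControlledMapP (CylControlled CX CR p) CY.IsControlled (cylH p f₀ f₁) := by
  rintro M ⟨M₁, M₂, hM₁, -, hM⟩
  refine CY.isControlled_subset (CY.isControlled_of_close hclose (hf₀ M₁ hM₁) (hf₁ M₁ hM₁)) ?_
  rintro _ ⟨⟨z, w⟩, hzw, rfl⟩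
  exact ⟨z.val.1, w.val.1, (hM ⟨(z, w), hzw, rfl⟩).1, cylH_eq_or z, cylH_eq_or w⟩

theorem cylH_preimage_bounded (hCR : IsGeneralisedRay CR)
    (hp : IsControlledMapP CX.IsControlled CR.IsControlled p)
    (hf₀ : ∀ B, CY.IsBoundedSet B → CX.IsBoundedSet (f₀ ⁻¹' B))
    (hf₁ : ∀ B, CY.IsBoundedSet B → CX.IsBoundedSet (f₁ ⁻¹' B))
    {B : Set Y} (hB : CY.IsBoundedSet B) :
    ∃ M, CylControlled CX CR p M ∧ ∃ z₀ : Cylinder p,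
      cylH p f₀ f₁ ⁻¹' B ⊆ {z | (z₀, z) ∈ M} := by
  obtain ⟨M, hM, z₀, hA⟩ :=
    exists_cylControlled_ball_of_isBoundedSet hCR hp ((hf₀ B hB).union (hf₁ B hB))
  refine ⟨M, hM, z₀, fun z hz => hA ?_⟩
  rcases cylH_eq_or (f₀ := f₀) (f₁ := f₁) z with h | h <;> rw [mem_preimage, h] at hz
  exacts [Or.inl hz, Or.inr hz]

end Cylinder

/-- Close coarse maps are coarsely homotopic via the explicit
elementary homotopy `H`: `H` is a coarse map on the cylinder, `H ∘ i₀ = f₀`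
and `H ∘ i₁ = f₁`. -/
theorem close_coarse_maps_explicit_homotopy {X Y : Type*}
    (CX : CoarseStructure X) (CY : CoarseStructure Y) (CR : CoarseStructure ℝ≥0)
    (hCR : IsGeneralisedRay CR)
    (p : X → ℝ≥0) (hp : IsCoarseMapP CX.IsControlled CR.IsControlled p)
    (f₀ f₁ : X → Y)
    (hf₀ : IsCoarseMapP CX.IsControlled CY.IsControlled f₀)
    (hf₁ : IsCoarseMapP CX.IsControlled CY.IsControlled f₁)
    (hclose : CY.IsControlled (Set.range fun x : X => (f₀ x, f₁ x))) :
    IsCoarseMapP (CylControlled CX CR p) CY.IsControlled (cylH p f₀ f₁) ∧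
    (∀ x : X, cylH p f₀ f₁ (cylI0 p x) = f₀ x) ∧
    (∀ x : X, cylH p f₀ f₁ (cylI1 p x) = f₁ x) := by
  refine ⟨⟨cylH_isControlledMap hf₀.1 hf₁.1 hclose,
    fun B hB => cylH_preimage_bounded hCR hp.1 hf₀.2 hf₁.2 hB⟩, fun x => ?_, fun x => ?_⟩
  · simp [cylH, cylI0]
  · simp [cylH, cylI1]
end

section
/- Let H be a real Hilbert space, let X be a compact subset of the unit sphere of H, let U and V be open subsets of X with X = U ∪ V and U ∩ V ≠ ∅, and let φ : [0,1) → [0,∞) be a homeomorphism. Then for every R > 0 there exists S > 0 such that every point h of O_φX satisfying dist(h, O_φU) < R and dist(h, O_φV) < R also satisfies dist(h, O_φ(U ∩ V)) < S. (Equivalently, N_R[O_φU] ∩ N_R[O_φV] ⊆ N_S[O_φ(U ∩ V)] inside O_φX, so that the decomposition O_φX = O_φU ∪ O_φV is coarsely excisive for the bounded coarse structure induced by the metric of H.) -/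
/-- For a homeomorphism `φ : [0,1) ≃ [0,∞)` and a subset `A` of the unit sphere
of `H`, the set `O_φA = {φ(t)·a : a ∈ A, t ∈ [0,1)}`. -/
def openConeImage {H : Type*} [NormedAddCommGroup H] [InnerProductSpace ℝ H]
    (φ : ↥(Set.Ico (0 : ℝ) 1) ≃ₜ ↥(Set.Ici (0 : ℝ))) (A : Set H) : Set H :=
  {h : H | ∃ a ∈ A, ∃ t : ↥(Set.Ico (0 : ℝ) 1), h = ((φ t : ℝ) • a)}

/-- For a compact subset `X = U ∪ V` of the unit sphere of a real
Hilbert space, with `U`, `V` relatively open and `U ∩ V ≠ ∅`, the decomposition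
`O_φX = O_φU ∪ O_φV` is coarsely excisive: for every `R > 0` there is `S > 0`
with `N_R[O_φU] ∩ N_R[O_φV] ∩ O_φX ⊆ N_S[O_φ(U ∩ V)]`. -/
theorem openCone_decomposition_coarsely_excisive
    {H : Type*} [NormedAddCommGroup H] [InnerProductSpace ℝ H] [CompleteSpace H]
    (X U V : Set H) (hX : IsCompact X) (hXsphere : X ⊆ Metric.sphere (0 : H) 1)
    (hUopen : ∃ U' : Set H, IsOpen U' ∧ U = U' ∩ X)
    (hVopen : ∃ V' : Set H, IsOpen V' ∧ V = V' ∩ X)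
    (hUV : X = U ∪ V) (hne : (U ∩ V).Nonempty)
    (φ : ↥(Set.Ico (0 : ℝ) 1) ≃ₜ ↥(Set.Ici (0 : ℝ))) :
    ∀ R > (0 : ℝ), ∃ S > (0 : ℝ), ∀ h ∈ openConeImage φ X,
      (∃ u ∈ openConeImage φ U, ‖h - u‖ < R) →
      (∃ v ∈ openConeImage φ V, ‖h - v‖ < R) →
      ∃ w ∈ openConeImage φ (U ∩ V), ‖h - w‖ < S := by
  classical
  obtain ⟨U', hU'open, hUeq⟩ := hUopen
  obtain ⟨V', hV'open, hVeq⟩ := hVopen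
  have hUX : U ⊆ X := hUeq ▸ Set.inter_subset_right
  have hVX : V ⊆ X := hVeq ▸ Set.inter_subset_right
  have hXne : X.Nonempty := ⟨hne.choose, hUX hne.choose_spec.1⟩
  -- For each point of `X` there is a radius such that the double ball lies in `U` or in `V`.
  have hrad : ∀ p ∈ X, ∃ δ : ℝ, 0 < δ ∧
      ((∀ q ∈ X, ‖q - p‖ < 2 * δ → q ∈ U) ∨ (∀ q ∈ X, ‖q - p‖ < 2 * δ → q ∈ V)) := by
    intro p hp
    have hp' : p ∈ U ∪ V := hUV ▸ hp
    rcases hp' with hpU | hpV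
    · have hpU' : p ∈ U' := by rw [hUeq] at hpU; exact hpU.1
      obtain ⟨δ, hδ, hball⟩ := Metric.isOpen_iff.mp hU'open p hpU'
      refine ⟨δ / 2, by linarith, Or.inl ?_⟩
      intro q hq hlt
      rw [hUeq]
      refine ⟨hball ?_, hq⟩
      rw [Metric.mem_ball, dist_eq_norm]
      linarith
    · have hpV' : p ∈ V' := by rw [hVeq] at hpV; exact hpV.1
      obtain ⟨δ, hδ, hball⟩ := Metric.isOpen_iff.mp hV'open p hpV'
      refine ⟨δ / 2, by linarith, Or.inr ?_⟩
      intro q hq hlt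
      rw [hVeq]
      refine ⟨hball ?_, hq⟩
      rw [Metric.mem_ball, dist_eq_norm]
      linarith
  choose! δ hδpos hδprop using hrad
  have hcover : X ⊆ ⋃ p ∈ X, Metric.ball p (δ p) :=
    fun x hx => Set.mem_biUnion hx (Metric.mem_ball_self (hδpos x hx))
  obtain ⟨b, hbX, hbfin, hbcover⟩ := hX.elim_finite_subcover_image
    (fun p _ => Metric.isOpen_ball) hcover
  have hbne : b.Nonempty := by
    rcases hXne with ⟨x0, hx0⟩
    obtain ⟨p, hp, -⟩ := Set.mem_iUnion₂.mp (hbcover hx0)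
    exact ⟨p, hp⟩
  have hFne : hbfin.toFinset.Nonempty := (Set.Finite.toFinset_nonempty hbfin).mpr hbne
  set ε := hbfin.toFinset.inf' hFne δ with hεdef
  have hεpos : 0 < ε := by
    rw [hεdef, Finset.lt_inf'_iff]
    intro p hp
    exact hδpos p (hbX ((Set.Finite.mem_toFinset hbfin).mp hp))
  -- Key claim: if `x ∈ X` is `ε`-close to `u ∈ U` and to `v ∈ V`, then `u` or `v` is in `U ∩ V`.
  have hkey : ∀ x ∈ X, ∀ u ∈ U, ∀ v ∈ V, ‖x - u‖ < ε → ‖x - v‖ < ε →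
      (u ∈ U ∩ V ∨ v ∈ U ∩ V) := by
    intro x hx u hu v hv hxu hxv
    obtain ⟨p, hpb, hxp⟩ := Set.mem_iUnion₂.mp (hbcover hx)
    have hpX : p ∈ X := hbX hpb
    have hεle : ε ≤ δ p := Finset.inf'_le δ ((Set.Finite.mem_toFinset hbfin).mpr hpb)
    have hxp' : ‖x - p‖ < δ p := by rwa [Metric.mem_ball, dist_eq_norm] at hxp
    rcases hδprop p hpX with hcase | hcase
    · right
      refine ⟨hcase v (hVX hv) ?_, hv⟩
      have heq : v - p = (v - x) + (x - p) := by abel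
      have h1 : ‖v - p‖ ≤ ‖v - x‖ + ‖x - p‖ := by rw [heq]; exact norm_add_le _ _
      have h2 : ‖v - x‖ = ‖x - v‖ := norm_sub_rev _ _
      linarith
    · left
      refine ⟨hu, hcase u (hUX hu) ?_⟩
      have heq : u - p = (u - x) + (x - p) := by abel
      have h1 : ‖u - p‖ ≤ ‖u - x‖ + ‖x - p‖ := by rw [heq]; exact norm_add_le _ _
      have h2 : ‖u - x‖ = ‖x - u‖ := norm_sub_rev _ _
      linarith
  intro R hR
  refine ⟨2 * R / ε + 2 * R + 1, by positivity, ?_⟩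
  intro h hh hu' hv'
  simp only [openConeImage, Set.mem_setOf_eq] at hh hu' hv'
  obtain ⟨x, hxX, th, rfl⟩ := hh
  obtain ⟨u, ⟨a, haU, ta, rfl⟩, hhu⟩ := hu'
  obtain ⟨v, ⟨c, hcV, tc, rfl⟩, hhv⟩ := hv'
  set r : ℝ := (φ th : ℝ) with hrdef
  have hr0 : 0 ≤ r := (φ th).2
  have hx1 : ‖x‖ = 1 := mem_sphere_zero_iff_norm.mp (hXsphere hxX)
  have ha1 : ‖a‖ = 1 := mem_sphere_zero_iff_norm.mp (hXsphere (hUX haU))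
  have hc1 : ‖c‖ = 1 := mem_sphere_zero_iff_norm.mp (hXsphere (hVX hcV))
  have hnormh : ‖r • x‖ = r := by
    rw [norm_smul, hx1, mul_one, Real.norm_of_nonneg hr0]
  have hbound : ∀ cc : H, ‖cc‖ = 1 → ∀ s : ℝ, 0 ≤ s → ‖r • x - s • cc‖ < R →
      r * ‖x - cc‖ < 2 * R := by
    intro cc hcc s hs hlt
    have h1 : ‖s • cc‖ = s := by rw [norm_smul, hcc, mul_one, Real.norm_of_nonneg hs]
    have h2 : |r - s| < R := by
      have h3 := abs_norm_sub_norm_le (r • x) (s • cc)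
      rw [hnormh, h1] at h3
      exact lt_of_le_of_lt h3 hlt
    have h4 : ‖s • cc - r • cc‖ < R := by
      rw [← sub_smul, norm_smul, hcc, mul_one, Real.norm_eq_abs, abs_sub_comm]
      exact h2
    have h5 : r • x - r • cc = (r • x - s • cc) + (s • cc - r • cc) := by abel
    calc r * ‖x - cc‖ = ‖r • x - r • cc‖ := by
          rw [← smul_sub, norm_smul, Real.norm_of_nonneg hr0]
      _ ≤ ‖r • x - s • cc‖ + ‖s • cc - r • cc‖ := by rw [h5]; exact norm_add_le _ _
      _ < R + R := add_lt_add hlt h4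
      _ = 2 * R := by ring
  have hba : r * ‖x - a‖ < 2 * R := hbound a ha1 _ (φ ta).2 hhu
  have hbc : r * ‖x - c‖ < 2 * R := hbound c hc1 _ (φ tc).2 hhv
  by_cases hcase : r ≤ 2 * R / ε
  · -- small radius: take `w = 0`
    obtain ⟨w0, hw0⟩ := hne
    refine ⟨(φ (φ.symm ⟨0, Set.mem_Ici.mpr le_rfl⟩) : ℝ) • w0, ⟨w0, hw0, φ.symm ⟨0, Set.mem_Ici.mpr le_rfl⟩, rfl⟩, ?_⟩
    have hz : ((φ (φ.symm ⟨0, Set.mem_Ici.mpr le_rfl⟩) : ℝ)) = 0 := by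
      rw [Homeomorph.apply_symm_apply]
    rw [hz, zero_smul, sub_zero, hnormh]
    have : (0 : ℝ) < 2 * R := by linarith
    linarith
  · push_neg at hcase
    have hrpos : 0 < r := lt_trans (by positivity) hcase
    have h2Rεr : 2 * R < ε * r := by
      rw [div_lt_iff₀ hεpos] at hcase
      linarith
    have hxa : ‖x - a‖ < ε := by nlinarith [norm_nonneg (x - a)]
    have hxc : ‖x - c‖ < ε := by nlinarith [norm_nonneg (x - c)]
    have hzr : ((φ (φ.symm ⟨r, Set.mem_Ici.mpr hr0⟩) : ℝ)) = r := by rw [Homeomorph.apply_symm_apply]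
    rcases hkey x hxX a haU c hcV hxa hxc with hw | hw
    · refine ⟨(φ (φ.symm ⟨r, Set.mem_Ici.mpr hr0⟩) : ℝ) • a, ⟨a, hw, φ.symm ⟨r, Set.mem_Ici.mpr hr0⟩, rfl⟩, ?_⟩
      rw [hzr, ← smul_sub, norm_smul, Real.norm_of_nonneg hr0]
      have : (0 : ℝ) < 2 * R / ε := by positivity
      linarith
    · refine ⟨(φ (φ.symm ⟨r, Set.mem_Ici.mpr hr0⟩) : ℝ) • c, ⟨c, hw, φ.symm ⟨r, Set.mem_Ici.mpr hr0⟩, rfl⟩, ?_⟩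
      rw [hzr, ← smul_sub, norm_smul, Real.norm_of_nonneg hr0]
      have : (0 : ℝ) < 2 * R / ε := by positivity
      linarith
end
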